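/- arXiv:2001.08052 — 2 statements merged into one kernel-verified Lean document; each statement's English description precedes it below -/
import Mathlib

section
/- Let G be cyclic of prime order p, k of characteristic p, V a kG-module and W an indecomposable kG-module of dimension n ≥ 2. If Δ^{p-1}(f) ∈ k[V]^G is an indecomposable homogeneous transfer (i.e., it does not lie in the subalgebra generated by invariants of strictly smaller degree), then the transfer covariant h = Δ^{p-n}(f) w_1 + ⋯ + Δ^{p-1}(f) w_n is an indecomposable covariant, i.e., h ∉ k[V]^G_+ · (k[V] ⊗ W)^G restricted to lower degrees. -/
open MvPolynomial TensorProduct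

/-- Index type for the variables of `k[V]` where `V = ⊕_{j<m} V_{nj j}`. -/
abbrev Idx (m : ℕ) (nj : Fin m → ℕ) := Σ j : Fin m, Fin (nj j)

/-- The action of the generator σ on `k[V]`:
`σ (x_{i,j}) = x_{i,j} + x_{i+1,j}` (and `σ` fixes the last variable of each block). -/
noncomputable def sigmaAct (k : Type*) [CommRing k] {m : ℕ} (nj : Fin m → ℕ) :
    MvPolynomial (Idx m nj) k →ₐ[k] MvPolynomial (Idx m nj) k :=
  aeval (fun v => X v + if h : v.2.1 + 1 < nj v.1 then X ⟨v.1, ⟨v.2.1 + 1, h⟩⟩ else 0)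

/-- Δ = σ - 1 as a `k`-linear endomorphism of `k[V]`. -/
noncomputable def Del (k : Type*) [CommRing k] {m : ℕ} (nj : Fin m → ℕ) :
    MvPolynomial (Idx m nj) k →ₗ[k] MvPolynomial (Idx m nj) k :=
  (sigmaAct k nj).toLinearMap - LinearMap.id

/-- The ring of invariants `k[V]^G` (fixed points of the generator σ). -/
noncomputable def invar (k : Type*) [CommRing k] {m : ℕ} (nj : Fin m → ℕ) :
    Subalgebra k (MvPolynomial (Idx m nj) k) :=
  AlgHom.equalizer (sigmaAct k nj) (AlgHom.id k _)

/-- Matrix of σ on the indecomposable module `W = V_n` in the basis `w_1,…,w_n`,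
with `σ • w_i = ∑_{j ≤ i} (-1)^{i-j} w_j`. -/
def sigmaWMat (k : Type*) [CommRing k] (n : ℕ) : Matrix (Fin n) (Fin n) k :=
  fun a b => if a ≤ b then (-1 : k) ^ ((b : ℕ) - (a : ℕ)) else 0

/-- σ acting on `W = V_n`. -/
noncomputable def sigmaW (k : Type*) [CommRing k] (n : ℕ) : (Fin n → k) →ₗ[k] (Fin n → k) :=
  Matrix.toLin' (sigmaWMat k n)

/-- σ acting diagonally on `k[V] ⊗ W`. -/
noncomputable def sigmaCov (k : Type*) [CommRing k] {m : ℕ} (nj : Fin m → ℕ) (n : ℕ) :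
    (MvPolynomial (Idx m nj) k ⊗[k] (Fin n → k)) →ₗ[k]
      (MvPolynomial (Idx m nj) k ⊗[k] (Fin n → k)) :=
  TensorProduct.map (sigmaAct k nj).toLinearMap (sigmaW k n)

/-- A covariant is a `G`-invariant element of `k[V] ⊗ W`. -/
def IsCovariant (k : Type*) [CommRing k] {m : ℕ} (nj : Fin m → ℕ) {n : ℕ}
    (h : MvPolynomial (Idx m nj) k ⊗[k] (Fin n → k)) : Prop :=
  sigmaCov k nj n h = h

/-- Elements of `k[V] ⊗ W` which are homogeneous of degree `d`. -/
def tensorHomog (k : Type*) [CommRing k] {m : ℕ} (nj : Fin m → ℕ) (n : ℕ) (d : ℕ) :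
    Set (MvPolynomial (Idx m nj) k ⊗[k] (Fin n → k)) :=
  {x | x ∈ Submodule.span k
    {y | ∃ f w, MvPolynomial.IsHomogeneous f d ∧ y = f ⊗ₜ[k] w}}


/-- `h` is decomposable: it lies in `k[V]^G_+ ⋅ (k[V] ⊗ W)^G`. -/
def IsDecomposableCov (k : Type*) [CommRing k] {m : ℕ} (nj : Fin m → ℕ) (n : ℕ)
    (h : MvPolynomial (Idx m nj) k ⊗[k] (Fin n → k)) : Prop :=
  h ∈ Submodule.span k
    {y | ∃ q x, q ∈ invar k nj ∧ (∃ e, 0 < e ∧ MvPolynomial.IsHomogeneous q e) ∧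
      IsCovariant k nj x ∧ y = q • x}

/-- A transfer covariant: `Δ^k(f) w_1 + Δ^{k+1}(f) w_2 + ⋯ + Δ^{p-1}(f) w_s`. -/
noncomputable def transferCov (k : Type*) [CommRing k] {m : ℕ} (nj : Fin m → ℕ) (n : ℕ)
    (p s : ℕ) (f : MvPolynomial (Idx m nj) k) :
    MvPolynomial (Idx m nj) k ⊗[k] (Fin n → k) :=
  ∑ i : Fin n, (if (i : ℕ) < s then ((Del k nj) ^ (p - s + (i : ℕ))) f else 0) ⊗ₜ[k]
    Pi.single i 1

def IsTransferCovariant (k : Type*) [CommRing k] {m : ℕ} (nj : Fin m → ℕ) (n : ℕ) (p : ℕ)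
    (h : MvPolynomial (Idx m nj) k ⊗[k] (Fin n → k)) : Prop :=
  ∃ f s, 0 < s ∧ s ≤ n ∧ s ≤ p ∧ h = transferCov k nj n p s f

/-- The module of covariants is generated over `k[V]^G` in degrees ≤ d. -/
def CovGenLE (k : Type*) [CommRing k] {m : ℕ} (nj : Fin m → ℕ) (n : ℕ) (d : ℕ) : Prop :=
  ∀ x, IsCovariant k nj x → x ∈ Submodule.span k
    {y | ∃ q z, q ∈ invar k nj ∧ IsCovariant k nj z ∧
      (∃ e ≤ d, z ∈ tensorHomog k nj n e) ∧ y = q • z}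

/-- `k[V]` is generated as a `k[V]^G`-module in degrees ≤ d. -/
def PolyGenLE (k : Type*) [CommRing k] {m : ℕ} (nj : Fin m → ℕ) (d : ℕ) : Prop :=
  ∀ f : MvPolynomial (Idx m nj) k, f ∈ Submodule.span k
    {y | ∃ q g, q ∈ invar k nj ∧ (∃ e ≤ d, MvPolynomial.IsHomogeneous g e) ∧ y = q * g}

/-- `k[V]^G` is generated as a `k`-algebra in degrees ≤ d. -/
def AlgGenLE (k : Type*) [CommRing k] {m : ℕ} (nj : Fin m → ℕ) (d : ℕ) : Prop :=
  ∀ f ∈ invar k nj, f ∈ Algebra.adjoin k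
    {g | g ∈ invar k nj ∧ ∃ e ≤ d, MvPolynomial.IsHomogeneous g e}

/-- Noether bound of the module of covariants over `k[V]^G`. -/
noncomputable def betaCov (k : Type*) [CommRing k] {m : ℕ} (nj : Fin m → ℕ) (n : ℕ) : ℕ :=
  sInf {d | CovGenLE k nj n d}

noncomputable def betaPolyMod (k : Type*) [CommRing k] {m : ℕ} (nj : Fin m → ℕ) : ℕ :=
  sInf {d | PolyGenLE k nj d}

noncomputable def betaAlg (k : Type*) [CommRing k] {m : ℕ} (nj : Fin m → ℕ) : ℕ :=
  sInf {d | AlgGenLE k nj d}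

/-- The norm `N_j = ∏_{i=0}^{p-1} σ^i (x_{1,j})`. -/
noncomputable def normJ (k : Type*) [CommRing k] {m : ℕ} (nj : Fin m → ℕ) (p : ℕ)
    (j : Fin m) (h0 : 0 < nj j) : MvPolynomial (Idx m nj) k :=
  ∏ i ∈ Finset.range p, (sigmaAct k nj)^[i] (X ⟨j, ⟨0, h0⟩⟩)



/-! Degree-`e` parts of the `w_n`-coordinate are `σ`-equivariant and multiplicative against
homogeneous invariants. A decomposition `h = ∑ qᵢ xᵢ` with `deg qᵢ > 0` therefore writes the
degree-`e` part of the `w_n`-coordinate of `h` as a sum of products `qᵢ gᵢ` of invariants of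
degree `< e`, except for the terms with `deg qᵢ = e`; those vanish, because the constant term of
a covariant is a `σ`-fixed vector of `W` and `W^G = k w_1` has no `w_n`-component when `n ≥ 2`.
For the transfer covariant that coordinate is `Δ^{p-1}(f)`, homogeneous of degree `e`. -/

section Homogeneous

variable {σ τ R : Type*} [CommSemiring R]

lemma homogeneousComponent_linearMap_of_isHomogeneous
    (φ : MvPolynomial σ R →ₗ[R] MvPolynomial τ R)
    (hφ : ∀ {d : ℕ} {q : MvPolynomial σ R}, q.IsHomogeneous d → (φ q).IsHomogeneous d)
    (d : ℕ) (q : MvPolynomial σ R) :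
    homogeneousComponent d (φ q) = φ (homogeneousComponent d q) := by
  induction q using MvPolynomial.induction_on' with
  | monomial a c =>
    rw [homogeneousComponent_of_mem (hφ (isHomogeneous_monomial c rfl)),
      homogeneousComponent_of_mem (isHomogeneous_monomial c rfl)]
    split_ifs <;> simp
  | add p q hp hq => simp only [map_add, hp, hq]

lemma constantCoeff_algHom_of_isHomogeneous
    (φ : MvPolynomial σ R →ₐ[R] MvPolynomial τ R)
    (hφ : ∀ {d : ℕ} {q : MvPolynomial σ R}, q.IsHomogeneous d → (φ q).IsHomogeneous d)
    (q : MvPolynomial σ R) :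
    constantCoeff (φ q) = constantCoeff q := by
  have h := homogeneousComponent_linearMap_of_isHomogeneous φ.toLinearMap hφ 0 q
  simp only [AlgHom.toLinearMap_apply, homogeneousComponent_zero, algHom_C,
    algebraMap_eq, C_inj] at h
  exact h

lemma MvPolynomial.IsHomogeneous.homogeneousComponent_mul {q : MvPolynomial σ R} {a : ℕ}
    (hq : q.IsHomogeneous a) (e : ℕ) (g : MvPolynomial σ R) :
    homogeneousComponent e (q * g) =
      if a ≤ e then q * homogeneousComponent (e - a) g else 0 := by
  induction g using MvPolynomial.induction_on' with
  | monomial b c =>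
    rw [homogeneousComponent_of_mem (hq.mul (isHomogeneous_monomial c rfl)),
      homogeneousComponent_of_mem (isHomogeneous_monomial c rfl)]
    split_ifs <;> first | rfl | omega | simp
  | add g g' hg hg' =>
    simp only [mul_add, map_add, hg, hg']
    split_ifs <;> simp

end Homogeneous

section Invariants

variable {k : Type*} [CommRing k] {m : ℕ} {nj : Fin m → ℕ}

lemma sigmaAct_isHomogeneous {q : MvPolynomial (Idx m nj) k} {d : ℕ}
    (hq : q.IsHomogeneous d) : (sigmaAct k nj q).IsHomogeneous d := by
  have hX : ∀ v : Idx m nj, (X v + if h : v.2.1 + 1 < nj v.1 then X ⟨v.1, ⟨v.2.1 + 1, h⟩⟩ else 0 :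
      MvPolynomial (Idx m nj) k).IsHomogeneous 1 := fun v => by
    split
    · exact (isHomogeneous_X _ _).add (isHomogeneous_X _ _)
    · simpa using isHomogeneous_X k v
  simpa [sigmaAct] using hq.aeval _ hX

lemma homogeneousComponent_mem_invar {g : MvPolynomial (Idx m nj) k} (hg : g ∈ invar k nj)
    (d : ℕ) : homogeneousComponent d g ∈ invar k nj :=
  (homogeneousComponent_linearMap_of_isHomogeneous (sigmaAct k nj).toLinearMap
    sigmaAct_isHomogeneous d g).symm.trans (congrArg _ hg)

end Invariants

section Coordinates

lemma piScalarRight_map_toLin' {k S A ι : Type*} [CommRing k] [CommRing S] [Algebra k S]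
    [AddCommGroup A] [Module k A] [Module S A] [IsScalarTower k S A] [Fintype ι] [DecidableEq ι]
    (φ : A →ₗ[k] A) (B : Matrix ι ι k) (x : A ⊗[k] (ι → k)) (a : ι) :
    piScalarRight k S A ι (TensorProduct.map φ (Matrix.toLin' B) x) a =
      ∑ b, B a b • φ (piScalarRight k S A ι x b) := by
  induction x using TensorProduct.induction_on with
  | zero => simp
  | tmul y w => simp [Matrix.mulVec, dotProduct, Finset.sum_smul, mul_smul]
  | add x x' hx hx' => simp only [map_add, Pi.add_apply, hx, hx', smul_add, Finset.sum_add_distrib]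

/-- `wCoords k nj n x i` is the coefficient of `w_{i+1}` in `x`. -/
noncomputable abbrev wCoords (k : Type*) [CommRing k] {m : ℕ} (nj : Fin m → ℕ) (n : ℕ) :
    (MvPolynomial (Idx m nj) k ⊗[k] (Fin n → k)) ≃ₗ[MvPolynomial (Idx m nj) k]
      (Fin n → MvPolynomial (Idx m nj) k) :=
  piScalarRight k _ _ _

variable {k : Type*} [CommRing k] {m : ℕ} {nj : Fin m → ℕ} {n : ℕ}

lemma wCoords_sigmaCov (x : MvPolynomial (Idx m nj) k ⊗[k] (Fin n → k)) (a : Fin n) :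
    wCoords k nj n (sigmaCov k nj n x) a =
      ∑ b, sigmaWMat k n a b • sigmaAct k nj (wCoords k nj n x b) :=
  piScalarRight_map_toLin' _ _ x a

lemma sigmaWMat_last (b : Fin (n + 1)) :
    sigmaWMat k (n + 1) (Fin.last n) b = Pi.single (M := fun _ => k) (Fin.last n) 1 b := by
  rcases Fin.eq_castSucc_or_eq_last b with ⟨b, rfl⟩ | rfl
  · simp [sigmaWMat, (Fin.castSucc_lt_last b).not_ge, (Fin.castSucc_lt_last b).ne]
  · simp [sigmaWMat]

lemma sigmaWMat_castSucc_last (b : Fin (n + 2)) :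
    sigmaWMat k (n + 2) (Fin.last n).castSucc b =
      Pi.single (M := fun _ => k) (Fin.last n).castSucc 1 b -
        Pi.single (M := fun _ => k) (Fin.last (n + 1)) 1 b := by
  rcases Fin.eq_castSucc_or_eq_last b with ⟨b, rfl⟩ | rfl
  · rcases Fin.eq_castSucc_or_eq_last b with ⟨b, rfl⟩ | rfl
    · simp [sigmaWMat, (Fin.castSucc_lt_last b).not_ge, (Fin.castSucc_lt_last b).ne,
        (Fin.castSucc_lt_last b.castSucc).ne]
    · simp [sigmaWMat, (Fin.castSucc_lt_last (Fin.last n)).ne]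
  · simp [sigmaWMat, (Fin.castSucc_lt_last (Fin.last n)).le, (Fin.castSucc_lt_last (Fin.last n)).ne]

lemma IsCovariant.sigmaAct_wCoords_last {x : MvPolynomial (Idx m nj) k ⊗[k] (Fin (n + 1) → k)}
    (hx : IsCovariant k nj x) :
    sigmaAct k nj (wCoords k nj (n + 1) x (Fin.last n)) = wCoords k nj (n + 1) x (Fin.last n) := by
  have h := wCoords_sigmaCov x (Fin.last n)
  rw [hx] at h
  simpa [sigmaWMat_last] using h.symm

/-- The constant term of a covariant lies in `W^G = k w_1`. -/
lemma IsCovariant.constantCoeff_wCoords_last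
    {x : MvPolynomial (Idx m nj) k ⊗[k] (Fin (n + 2) → k)} (hx : IsCovariant k nj x) :
    constantCoeff (wCoords k nj (n + 2) x (Fin.last (n + 1))) = 0 := by
  have h := congrArg constantCoeff (wCoords_sigmaCov x (Fin.last n).castSucc)
  rw [hx] at h
  simp only [piScalarRight_apply, sigmaWMat_castSucc_last, sub_smul, Finset.sum_sub_distrib,
    Fintype.sum_single_smul, one_smul, map_sub,
    constantCoeff_algHom_of_isHomogeneous _ sigmaAct_isHomogeneous] at h
  exact sub_eq_self.mp h.symm

lemma wCoords_transferCov_last {p : ℕ} (hnp : n + 1 ≤ p) (f : MvPolynomial (Idx m nj) k) :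
    wCoords k nj (n + 1) (transferCov k nj (n + 1) p (n + 1) f) (Fin.last n) =
      (Del k nj ^ (p - 1)) f := by
  simp [transferCov, Pi.single_apply, Fin.is_le, show p - (n + 1) + n = p - 1 by omega]

end Coordinates

lemma IsDecomposableCov.homogeneousComponent_wCoords_last_mem_adjoin {k : Type*} [CommRing k]
    {m : ℕ} {nj : Fin m → ℕ} {n : ℕ} {h : MvPolynomial (Idx m nj) k ⊗[k] (Fin (n + 2) → k)}
    (hh : IsDecomposableCov k nj (n + 2) h) (e : ℕ) :
    homogeneousComponent e (wCoords k nj (n + 2) h (Fin.last (n + 1))) ∈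
      Algebra.adjoin k {g | g ∈ invar k nj ∧ ∃ e' < e, g.IsHomogeneous e'} := by
  induction hh using Submodule.span_induction with
  | mem y hy =>
    obtain ⟨q, x, hq, ⟨d, hd, hqd⟩, hx, rfl⟩ := hy
    rw [map_smul, Pi.smul_apply, smul_eq_mul, hqd.homogeneousComponent_mul]
    split_ifs with hde
    · rcases hde.eq_or_lt with rfl | hlt
      · have h0 : coeff 0 (wCoords k nj (n + 2) x (Fin.last (n + 1))) = 0 :=
          hx.constantCoeff_wCoords_last
        rw [Nat.sub_self, homogeneousComponent_zero, h0, C_0, mul_zero]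
        exact zero_mem _
      · refine mul_mem (Algebra.subset_adjoin ⟨hq, d, hlt, hqd⟩) (Algebra.subset_adjoin
          ⟨homogeneousComponent_mem_invar hx.sigmaAct_wCoords_last _, e - d, by omega,
            homogeneousComponent_isHomogeneous _ _⟩)
    · exact zero_mem _
  | zero => simp
  | add x y _ _ hx hy => simpa only [map_add, Pi.add_apply] using add_mem hx hy
  | smul c x _ hx => simpa using Subalgebra.smul_mem _ hx c

theorem stmt10_general (p : ℕ) (k : Type*) [Field k]
    {m : ℕ} (nj : Fin m → ℕ)
    (n : ℕ) (hn : 2 ≤ n) (hnp : n ≤ p)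
    (f : MvPolynomial (Idx m nj) k) (e : ℕ)
    (hhom : MvPolynomial.IsHomogeneous (((Del k nj) ^ (p - 1)) f) e)
    (hindec : ((Del k nj) ^ (p - 1)) f ∉ Algebra.adjoin k
      {g | g ∈ invar k nj ∧ ∃ e' < e, MvPolynomial.IsHomogeneous g e'}) :
    ¬ IsDecomposableCov k nj n (transferCov k nj n p n f) := by
  obtain ⟨n, rfl⟩ := Nat.exists_eq_add_of_le' hn
  intro hdec
  have h := hdec.homogeneousComponent_wCoords_last_mem_adjoin e
  rw [wCoords_transferCov_last hnp, homogeneousComponent_eq_self hhom] at h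
  exact hindec h

/-- Lemma `lb`. If `Δ^{p-1}(f)` is an indecomposable homogeneous
transfer, then the transfer covariant `Δ^{p-n}(f)w_1 + ⋯ + Δ^{p-1}(f)w_n` is
indecomposable. -/
theorem stmt10 (p : ℕ) (hp : p.Prime) (k : Type*) [Field k] [CharP k p]
    {m : ℕ} (nj : Fin m → ℕ) (hnj : ∀ j, 1 ≤ nj j ∧ nj j ≤ p)
    (n : ℕ) (hn : 2 ≤ n) (hnp : n ≤ p)
    (f : MvPolynomial (Idx m nj) k) (e : ℕ)
    (hhom : MvPolynomial.IsHomogeneous (((Del k nj) ^ (p - 1)) f) e)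
    (hindec : ((Del k nj) ^ (p - 1)) f ∉ Algebra.adjoin k
      {g | g ∈ invar k nj ∧ ∃ e' < e, MvPolynomial.IsHomogeneous g e'}) :
    ¬ IsDecomposableCov k nj n (transferCov k nj n p n f) :=
  stmt10_general p k nj n hn hnp f e hhom hindec
end

section
/- Let G be cyclic of prime order p, k of characteristic p, and V a finite-dimensional kG-module with dual variable x whose norm is N = Π_{k=0}^{p-1} σ^k(x). Then any f ∈ k[V]^G can be written as f = qN + r with q ∈ k[V]^G and r ∈ B^G, where B is the G-stable complement of N·k[V] spanned by monomials of x-degree < p. -/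
open MvPolynomial TensorProduct

open scoped Polynomial

/-! Write `x = x_{0,j}` and view `k[V]` as `A[x]`, with `A` the polynomials in the other
variables. The generator `σ` maps `A` into itself and sends `x` to `x` plus an element of `A`, so
it does not raise the `x`-degree, and each `σ^i(x)` is monic of degree one in `x`; hence the norm
`N` is monic of degree `p` in `x`. It is invariant because `σ^p - 1 = (σ - 1)^p` in characteristic
`p` and `(σ - 1)^p` kills `x` when the block has length at most `p`. Dividing an invariant `f` by
`N` gives `f = qN + r` with `deg_x r < p`; applying `σ` yields a second such division, so
uniqueness of division by a monic polynomial makes `q` and `r` invariant. -/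

theorem sub_one_pow_expChar {k A : Type*} [CommRing k] [Ring A] [Algebra k A] (p : ℕ)
    [ExpChar k p] (a : A) : (a - 1) ^ p = a ^ p - 1 := by
  simpa using congrArg (Polynomial.aeval a) (sub_pow_expChar (Polynomial.X : k[X]) 1)

namespace Polynomial
variable {R S : Type*} [CommRing R] [CommRing S]

theorem natDegree_map_le_of_natDegree_C_X (ψ : R[X] →+* S[X])
    (hC : ∀ c, (ψ (C c)).natDegree = 0) (hX : (ψ X).natDegree ≤ 1) (g : R[X]) :
    (ψ g).natDegree ≤ g.natDegree := by
  have hg : ψ g = ∑ i ∈ Finset.range (g.natDegree + 1), ψ (C (g.coeff i)) * ψ X ^ i := by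
    simp only [← map_pow, ← map_mul, ← map_sum, ← g.as_sum_range_C_mul_X_pow]
  refine hg ▸ natDegree_sum_le_of_forall_le _ _ fun i hi => ?_
  calc (ψ (C (g.coeff i)) * ψ X ^ i).natDegree
      ≤ (ψ (C (g.coeff i))).natDegree + i * (ψ X).natDegree :=
        natDegree_mul_le_of_le le_rfl natDegree_pow_le
    _ ≤ 0 + i * 1 := by rw [hC]; gcongr
    _ ≤ g.natDegree := by have := Finset.mem_range.1 hi; omega

theorem map_divByMonic_modByMonic_eq_self (τ : R[X] →+* R[X])
    (hτ : ∀ g, (τ g).natDegree ≤ g.natDegree) {f N : R[X]} (hN : N.Monic) (hf : τ f = f)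
    (hτN : τ N = N) :
    τ (f /ₘ N) = f /ₘ N ∧ τ (f %ₘ N) = f %ₘ N := by
  nontriviality R
  have hdeg : (τ (f %ₘ N)).degree < N.degree := by
    rcases eq_or_ne (τ (f %ₘ N)) 0 with h | h
    · rw [h, degree_zero]
      exact bot_lt_iff_ne_bot.2 (mt degree_eq_bot.1 hN.ne_zero)
    have hr : f %ₘ N ≠ 0 := fun h' => h (by rw [h', map_zero])
    rw [degree_eq_natDegree h]
    exact (WithBot.coe_le_coe.2 (hτ _)).trans_lt
      ((degree_eq_natDegree hr).symm.trans_lt (degree_modByMonic_lt f hN))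
  have h := div_modByMonic_unique (f := f) (τ (f /ₘ N)) (τ (f %ₘ N)) hN
    ⟨by conv_rhs => rw [← hf, ← modByMonic_add_div f N]
        rw [map_add, map_mul, hτN], hdeg⟩
  exact ⟨h.1.symm, h.2.symm⟩

end Polynomial

namespace MvPolynomial

section SplitVar

variable (R : Type*) {ι : Type*} [CommRing R] [DecidableEq ι] (a : ι)

noncomputable def splitVar : MvPolynomial ι R ≃ₐ[R] (MvPolynomial {b // b ≠ a} R)[X] :=
  (renameEquiv R (Equiv.optionSubtypeNe a).symm).trans (optionEquivLeft R _)

variable {R}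

theorem natDegree_splitVar (g : MvPolynomial ι R) :
    (splitVar R a g).natDegree = degreeOf a g :=
  (degreeOf_eq_natDegree a g).symm

theorem splitVar_X_self : splitVar R a (X a) = Polynomial.X := by
  simp [splitVar, optionEquivLeft_X_none]

theorem splitVar_rename (c : MvPolynomial {b // b ≠ a} R) :
    splitVar R a (rename Subtype.val c) = Polynomial.C c := by
  have : (splitVar R a).toAlgHom.comp (rename Subtype.val) = Polynomial.CAlgHom :=
    algHom_ext fun b => by
      simp [splitVar, Equiv.optionSubtypeNe_symm_of_ne b.2, optionEquivLeft_X_some]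
  exact DFunLike.congr_fun this c

theorem exists_splitVar_eq_C {g : MvPolynomial ι R} (hg : g ∈ supported R {b | b ≠ a}) :
    ∃ c, splitVar R a g = Polynomial.C c := by
  obtain ⟨c, rfl⟩ := (supported_eq_range_rename _).le hg
  exact ⟨c, splitVar_rename a c⟩

theorem splitVar_symm_C_mem_supported (c : MvPolynomial {b // b ≠ a} R) :
    (splitVar R a).symm (Polynomial.C c) ∈ supported R {b | b ≠ a} := by
  rw [(AlgEquiv.symm_apply_eq _).2 (splitVar_rename a c).symm, supported_eq_range_rename]
  exact ⟨c, rfl⟩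

end SplitVar

section Triangular

variable {R ι : Type*} [CommRing R] {a : ι} {σ : MvPolynomial ι R →ₐ[R] MvPolynomial ι R}

theorem map_mem_supported_of_map_X_mem (hσ : ∀ b ≠ a, σ (X b) ∈ supported R {b | b ≠ a})
    {g : MvPolynomial ι R} (hg : g ∈ supported R {b | b ≠ a}) :
    σ g ∈ supported R {b | b ≠ a} := by
  have : (supported R {b | b ≠ a}).map σ ≤ supported R {b | b ≠ a} := by
    rw [supported_eq_adjoin_X, AlgHom.map_adjoin, Algebra.adjoin_le_iff]
    rintro _ ⟨_, ⟨b, hb, rfl⟩, rfl⟩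
    exact hσ b hb
  exact this ⟨g, hg, rfl⟩

theorem iterate_X_sub_X_mem_supported (hσ : ∀ b ≠ a, σ (X b) ∈ supported R {b | b ≠ a})
    (hσa : σ (X a) - X a ∈ supported R {b | b ≠ a}) (i : ℕ) :
    σ^[i] (X a) - X a ∈ supported R {b | b ≠ a} := by
  induction i with
  | zero => simp
  | succ i ih =>
    have : σ^[i + 1] (X a) - X a = σ (σ^[i] (X a) - X a) + (σ (X a) - X a) := by
      rw [Function.iterate_succ_apply', map_sub]; ring
    rw [this]
    exact add_mem (map_mem_supported_of_map_X_mem hσ ih) hσa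

variable [DecidableEq ι]

theorem exists_splitVar_iterate_X (hσ : ∀ b ≠ a, σ (X b) ∈ supported R {b | b ≠ a})
    (hσa : σ (X a) - X a ∈ supported R {b | b ≠ a}) (i : ℕ) :
    ∃ c, splitVar R a (σ^[i] (X a)) = Polynomial.X + Polynomial.C c := by
  obtain ⟨c, hc⟩ := exists_splitVar_eq_C a (iterate_X_sub_X_mem_supported hσ hσa i)
  refine ⟨c, ?_⟩
  rw [← splitVar_X_self, ← hc, ← map_add, add_sub_cancel]

theorem degreeOf_map_le (hσ : ∀ b ≠ a, σ (X b) ∈ supported R {b | b ≠ a})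
    (hσa : σ (X a) - X a ∈ supported R {b | b ≠ a}) (g : MvPolynomial ι R) :
    degreeOf a (σ g) ≤ degreeOf a g := by
  let ψ := ((splitVar R a).toRingHom.comp σ.toRingHom).comp (splitVar R a).symm.toRingHom
  have hψ : ∀ h, ψ h = splitVar R a (σ ((splitVar R a).symm h)) := fun _ => rfl
  have hC : ∀ c, (ψ (Polynomial.C c)).natDegree = 0 := fun c => by
    obtain ⟨d, hd⟩ := exists_splitVar_eq_C a
      (map_mem_supported_of_map_X_mem hσ (splitVar_symm_C_mem_supported a c))
    rw [hψ, hd, Polynomial.natDegree_C]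
  have hX : (ψ Polynomial.X).natDegree ≤ 1 := by
    obtain ⟨c, hc⟩ := exists_splitVar_iterate_X hσ hσa 1
    rw [hψ, ← splitVar_X_self, AlgEquiv.symm_apply_apply]
    exact (congrArg Polynomial.natDegree hc).trans_le
      (Polynomial.natDegree_add_C.trans_le Polynomial.natDegree_X_le)
  simpa [hψ, natDegree_splitVar] using
    Polynomial.natDegree_map_le_of_natDegree_C_X ψ hC hX (splitVar R a g)

theorem splitVar_prod_iterate_X [Nontrivial R]
    (hσ : ∀ b ≠ a, σ (X b) ∈ supported R {b | b ≠ a})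
    (hσa : σ (X a) - X a ∈ supported R {b | b ≠ a}) (n : ℕ) :
    (splitVar R a (∏ i ∈ Finset.range n, σ^[i] (X a))).Monic ∧
      degreeOf a (∏ i ∈ Finset.range n, σ^[i] (X a)) = n := by
  choose c hc using exists_splitVar_iterate_X hσ hσa
  have hmonic : ∀ i ∈ Finset.range n, (splitVar R a (σ^[i] (X a))).Monic :=
    fun i _ => hc i ▸ Polynomial.monic_X_add_C (c i)
  refine ⟨map_prod (splitVar R a) _ _ ▸ Polynomial.monic_prod_of_monic _ _ hmonic, ?_⟩
  rw [← natDegree_splitVar, map_prod, Polynomial.natDegree_prod_of_monic _ _ hmonic]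
  simp [hc]

end Triangular

section DivisionByMonic

variable {R ι : Type*} [CommRing R] [DecidableEq ι] {a : ι}
  {σ : MvPolynomial ι R →ₐ[R] MvPolynomial ι R}

theorem exists_eq_mul_add_of_map_eq_self (hσ : ∀ g, degreeOf a (σ g) ≤ degreeOf a g)
    {N f : MvPolynomial ι R} (hN : (splitVar R a N).Monic) (hN0 : 0 < degreeOf a N)
    (hσN : σ N = N) (hf : σ f = f) :
    ∃ q r, σ q = q ∧ σ r = r ∧ degreeOf a r < degreeOf a N ∧ f = q * N + r := by
  set φ := splitVar R a
  let τ := (φ.toRingHom.comp σ.toRingHom).comp φ.symm.toRingHom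
  have hτφ : ∀ g, τ (φ g) = φ (σ g) := fun g => by simp [τ]
  have hτ : ∀ g, (τ g).natDegree ≤ g.natDegree := fun g => by
    have := hσ (φ.symm g)
    rwa [← natDegree_splitVar, ← natDegree_splitVar a (φ.symm g), AlgEquiv.apply_symm_apply]
      at this
  have hfixed : ∀ g, τ g = g → σ (φ.symm g) = φ.symm g := fun g hg => by
    rw [← φ.apply_symm_apply g, hτφ] at hg
    exact φ.injective hg
  have hN1 : φ N ≠ 1 := fun h => by
    simp [← natDegree_splitVar, φ, h] at hN0
  obtain ⟨hq, hr⟩ := Polynomial.map_divByMonic_modByMonic_eq_self τ hτ hN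
    ((hτφ f).trans (congrArg φ hf)) ((hτφ N).trans (congrArg φ hσN))
  refine ⟨φ.symm (φ f /ₘ φ N), φ.symm (φ f %ₘ φ N), hfixed _ hq, hfixed _ hr, ?_, ?_⟩
  · rw [← natDegree_splitVar a N, ← natDegree_splitVar, AlgEquiv.apply_symm_apply]
    exact Polynomial.natDegree_modByMonic_lt _ hN hN1
  · apply φ.injective
    rw [map_add, map_mul, AlgEquiv.apply_symm_apply, AlgEquiv.apply_symm_apply, add_comm,
      mul_comm, Polynomial.modByMonic_add_div]

end DivisionByMonic

theorem mem_span_monomial_of_degreeOf_lt {R ι : Type*} [CommSemiring R] {a : ι} {n : ℕ}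
    {g : MvPolynomial ι R} (h : degreeOf a g < n) :
    g ∈ Submodule.span R {g | ∃ s : ι →₀ ℕ, s a < n ∧ g = monomial s 1} := by
  rw [g.as_sum]
  refine Submodule.sum_mem _ fun s hs => ?_
  rw [← mul_one (coeff s g), ← smul_eq_mul, ← smul_monomial]
  exact Submodule.smul_mem _ _ (Submodule.subset_span
    ⟨s, (degreeOf_lt_iff ((Nat.zero_le _).trans_lt h)).1 h s hs, rfl⟩)

end MvPolynomial

theorem map_prod_range_iterate {M F : Type*} [CommMonoid M] [FunLike F M M]
    [MonoidHomClass F M M] (σ : F) {x : M} {n : ℕ} (hx : σ^[n] x = x) :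
    σ (∏ i ∈ Finset.range n, σ^[i] x) = ∏ i ∈ Finset.range n, σ^[i] x := by
  rw [map_prod]
  simp_rw [← Function.iterate_succ_apply' σ]
  cases n with
  | zero => simp
  | succ n => rw [Finset.prod_range_succ, hx, Finset.prod_range_succ', Function.iterate_zero_apply]

section SigmaAct

variable {k : Type*} [CommRing k] {m : ℕ} {nj : Fin m → ℕ}

theorem sigmaAct_X (v : Idx m nj) : sigmaAct k nj (X v) =
    X v + if h : v.2.1 + 1 < nj v.1 then X ⟨v.1, ⟨v.2.1 + 1, h⟩⟩ else 0 := by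
  simp [sigmaAct]

theorem Del_apply (g : MvPolynomial (Idx m nj) k) : Del k nj g = sigmaAct k nj g - g := rfl

theorem sigmaAct_X_sub_X_mem_supported (j : Fin m) (h0 : 0 < nj j) (v : Idx m nj) :
    sigmaAct k nj (X v) - X v ∈ supported k {b | b ≠ ⟨j, ⟨0, h0⟩⟩} := by
  rw [sigmaAct_X, add_sub_cancel_left]
  split
  · refine Algebra.subset_adjoin (Set.mem_image_of_mem X fun h => ?_)
    simpa using congrArg (fun w : Idx m nj => (w.2 : ℕ)) h
  · exact zero_mem _

theorem sigmaAct_X_mem_supported (j : Fin m) (h0 : 0 < nj j) (v : Idx m nj)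
    (hv : v ≠ ⟨j, ⟨0, h0⟩⟩) :
    sigmaAct k nj (X v) ∈ supported k {b | b ≠ ⟨j, ⟨0, h0⟩⟩} := by
  have hXv : X v ∈ supported k {b | b ≠ ⟨j, ⟨0, h0⟩⟩} :=
    Algebra.subset_adjoin (Set.mem_image_of_mem X hv)
  simpa using add_mem hXv (sigmaAct_X_sub_X_mem_supported j h0 v)

theorem Del_pow_X_zero (j : Fin m) (h0 : 0 < nj j) (i : ℕ) :
    (Del k nj ^ i) (X ⟨j, ⟨0, h0⟩⟩) =
      if h : i < nj j then X ⟨j, ⟨i, h⟩⟩ else 0 := by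
  induction i with
  | zero => simp [h0]
  | succ i ih =>
    rw [pow_succ', Module.End.mul_apply, ih]
    split
    · rw [Del_apply, sigmaAct_X, add_sub_cancel_left]
    · rw [map_zero, dif_neg (by omega)]

theorem sigmaAct_iterate_X_zero (p : ℕ) [ExpChar k p] (j : Fin m) (h0 : 0 < nj j)
    (hle : nj j ≤ p) : (sigmaAct k nj)^[p] (X ⟨j, ⟨0, h0⟩⟩) = X ⟨j, ⟨0, h0⟩⟩ := by
  have h := LinearMap.congr_fun (sub_one_pow_expChar (k := k) p (sigmaAct k nj).toLinearMap)
    (X ⟨j, ⟨0, h0⟩⟩)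
  change (Del k nj ^ p) _ = _ at h
  rw [Del_pow_X_zero, dif_neg (by omega), eq_comm, LinearMap.sub_apply, sub_eq_zero] at h
  simpa [Module.End.pow_apply] using h

theorem sigmaAct_normJ (p : ℕ) [ExpChar k p] (j : Fin m) (h0 : 0 < nj j) (hle : nj j ≤ p) :
    sigmaAct k nj (normJ k nj p j h0) = normJ k nj p j h0 :=
  map_prod_range_iterate _ (sigmaAct_iterate_X_zero p j h0 hle)

theorem splitVar_normJ [Nontrivial k] (p : ℕ) (j : Fin m) (h0 : 0 < nj j) :
    (splitVar k ⟨j, ⟨0, h0⟩⟩ (normJ k nj p j h0)).Monic ∧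
      degreeOf ⟨j, ⟨0, h0⟩⟩ (normJ k nj p j h0) = p :=
  splitVar_prod_iterate_X (sigmaAct_X_mem_supported j h0)
    (sigmaAct_X_sub_X_mem_supported j h0 _) p

theorem degreeOf_sigmaAct_le (j : Fin m) (h0 : 0 < nj j) (g : MvPolynomial (Idx m nj) k) :
    degreeOf ⟨j, ⟨0, h0⟩⟩ (sigmaAct k nj g) ≤ degreeOf ⟨j, ⟨0, h0⟩⟩ g :=
  degreeOf_map_le (sigmaAct_X_mem_supported j h0) (sigmaAct_X_sub_X_mem_supported j h0 _) g

end SigmaAct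

/-- Any invariant `f` can be written `f = qN + r` with `q`
invariant and `r` an invariant lying in the span `B` of monomials of
`x_{1,j}`-degree `< p`. -/
theorem stmt16 (p : ℕ) (hp : p.Prime) (k : Type*) [Field k] [CharP k p]
    {m : ℕ} (nj : Fin m → ℕ) (hnj : ∀ j, 1 ≤ nj j ∧ nj j ≤ p)
    (j : Fin m)
    (f : MvPolynomial (Idx m nj) k) (hf : f ∈ invar k nj) :
    ∃ q r, q ∈ invar k nj ∧ r ∈ invar k nj ∧
      r ∈ Submodule.span k
        {g : MvPolynomial (Idx m nj) k | ∃ s : Idx m nj →₀ ℕ,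
          s ⟨j, ⟨0, by have := (hnj j).1; omega⟩⟩ < p ∧
          g = MvPolynomial.monomial s 1} ∧
      f = q * normJ k nj p j (by have := (hnj j).1; omega) + r := by
  have h0 : 0 < nj j := (hnj j).1
  have : Fact p.Prime := ⟨hp⟩
  obtain ⟨hN, hNdeg⟩ := splitVar_normJ (k := k) p j h0
  obtain ⟨q, r, hq, hr, hrdeg, hfqr⟩ := exists_eq_mul_add_of_map_eq_self
    (degreeOf_sigmaAct_le j h0) hN (by rw [hNdeg]; exact hp.pos)
    (sigmaAct_normJ p j h0 (hnj j).2) hf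
  exact ⟨q, r, hq, hr, mem_span_monomial_of_degreeOf_lt (hrdeg.trans_eq hNdeg), hfqr⟩
end
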